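/- Let y, λ ∈ ℝ₊^M with y ≠ 0, λ ≠ 0, and supp(y) ⊆ supp(λ); set Y = ‖y‖₁ and Λ = ‖λ‖₁. Let ε > 0 and suppose I(y‖λ) ≤ ε. Define G(z) = (1 + √(2z))·(z + log(1 + √(2z)) − √(2z)) / √(2z) for z > 0. Then |Y − Λ| ≤ √(2εY) + Y·G(2ε/Y). -/

import Mathlib

noncomputable section

/-- ℓ₁ norm of a vector. -/
def l1norm {M : ℕ} (v : Fin M → ℝ) : ℝ := ∑ j, |v j|

/-- I-divergence of nonnegative vectors (with the convention `0 · log 0 = 0`, which holds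
automatically since `Real.log 0 = 0`). -/
def Idiv {M : ℕ} (x y : Fin M → ℝ) : ℝ :=
  ∑ j, (x j * Real.log (x j / y j) + y j - x j)

/-- The auxiliary function `G` from the paper. -/
def Gfun (z : ℝ) : ℝ :=
  (1 + Real.sqrt (2 * z)) * (z + Real.log (1 + Real.sqrt (2 * z)) - Real.sqrt (2 * z)) /
    Real.sqrt (2 * z)

/-!
The log-sum inequality (summing `a log (a / b) ≥ a log c + a - b c` with `c = Y / Λ`) reduces the
claim to the total masses: `Y log (Y / Λ) + Λ - Y ≤ ε`, i.e. `Y (r - 1 - log r) ≤ ε` for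
`r = Λ / Y`. If `r ≤ 1`, then `r - 1 - log r ≥ (1 - r)² / 2` gives `Y - Λ ≤ √(2εY)`.
If `r = 1 + s > 1`, bounding `log (1 + s)` by its tangent line at `v = √(2ε / Y)` gives
`s ≤ v + H v` with `H t = (1 + t)(t² / 2 + log (1 + t) - t) / t`; as `G z = H √(2z)` and `H` is
increasing, `H v ≤ H (√(4ε / Y)) = G (2ε / Y)`.
-/

open Real Set

lemma log_le_sub_inv_div_two {x : ℝ} (hx : 1 ≤ x) : log x ≤ (x - x⁻¹) / 2 := by
  rw [← sinh_log (by linarith)]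
  exact self_le_sinh_iff.2 (log_nonneg hx)

def Kfun (t : ℝ) : ℝ := t ^ 2 / 2 + log (1 + t) - t

def Hfun (t : ℝ) : ℝ := (1 + t) * Kfun t / t

lemma Kfun_nonneg {t : ℝ} (ht : 0 ≤ t) : 0 ≤ Kfun t := by
  have hlog := le_log_one_add_of_nonneg ht
  rw [div_le_iff₀ (by linarith)] at hlog
  unfold Kfun
  nlinarith [mul_nonneg ht (sq_nonneg t)]

lemma Kfun_le_pow_three {t : ℝ} (ht : 0 ≤ t) : Kfun t ≤ t ^ 3 := by
  have hlog := log_le_sub_inv_div_two (le_add_of_nonneg_right ht)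
  have hsub : ((1 + t) - (1 + t)⁻¹) / 2 = t - t ^ 2 / 2 + t ^ 3 / (2 * (1 + t)) := by
    field_simp; ring
  have hcube : t ^ 3 / (2 * (1 + t)) ≤ t ^ 3 :=
    div_le_self (pow_nonneg ht 3) (by linarith)
  unfold Kfun
  linarith

lemma hasDerivAt_Kfun {t : ℝ} (ht : -1 < t) : HasDerivAt Kfun (t ^ 2 / (1 + t)) t := by
  have h1t : 1 + t ≠ 0 := by linarith
  have hlog := ((hasDerivAt_id t).const_add 1).log h1t
  refine ((((hasDerivAt_pow 2 t).div_const 2).add hlog).sub (hasDerivAt_id t)).congr_deriv ?_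
  simp only [id]
  field_simp
  ring

lemma hasDerivAt_Hfun {t : ℝ} (ht : 0 < t) :
    HasDerivAt Hfun ((t ^ 3 - Kfun t) / t ^ 2) t := by
  have hK := hasDerivAt_Kfun (show -1 < t by linarith)
  refine ((((hasDerivAt_id t).const_add 1).mul hK).div (hasDerivAt_id t) ht.ne').congr_deriv ?_
  simp only [id, Pi.mul_apply]
  field_simp
  ring

lemma monotoneOn_Hfun : MonotoneOn Hfun (Ioi 0) := by
  refine monotoneOn_of_hasDerivWithinAt_nonneg (convex_Ioi 0)
    (fun t ht => (hasDerivAt_Hfun ht).continuousAt.continuousWithinAt)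
    (fun t ht => (hasDerivAt_Hfun (by simpa using ht)).hasDerivWithinAt) fun t ht => ?_
  rw [interior_Ioi] at ht
  exact div_nonneg (sub_nonneg.2 (Kfun_le_pow_three ht.le)) (sq_nonneg t)

lemma Hfun_nonneg {t : ℝ} (ht : 0 ≤ t) : 0 ≤ Hfun t :=
  div_nonneg (mul_nonneg (by linarith) (Kfun_nonneg ht)) ht

lemma Gfun_eq_Hfun_sqrt (z : ℝ) : Gfun z = Hfun (√(2 * z)) := by
  rcases le_or_gt 0 z with hz | hz
  · rw [Hfun, Kfun, sq_sqrt (by linarith), Gfun]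
    ring_nf
  · rw [sqrt_eq_zero'.2 (by linarith), Gfun, Hfun, sqrt_eq_zero'.2 (by linarith)]
    simp

lemma Gfun_nonneg (z : ℝ) : 0 ≤ Gfun z :=
  Gfun_eq_Hfun_sqrt z ▸ Hfun_nonneg (sqrt_nonneg _)

lemma sq_div_two_le_sub_sub_log {r : ℝ} (hr0 : 0 < r) (hr1 : r ≤ 1) :
    (1 - r) ^ 2 / 2 ≤ r - 1 - log r := by
  have hx : 0 ≤ (1 - r) / r := div_nonneg (by linarith) hr0.le
  have hlog := le_log_one_add_of_nonneg hx
  have h1x : 1 + (1 - r) / r = r⁻¹ := by field_simp; ring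
  have hfrac : 2 * ((1 - r) / r) / ((1 - r) / r + 2) = 2 * (1 - r) / (1 + r) := by
    rw [div_eq_div_iff (by positivity) (by positivity)]
    field_simp
    ring
  rw [h1x, log_inv, hfrac, div_le_iff₀ (by linarith)] at hlog
  nlinarith [sq_nonneg (1 - r), mul_nonneg (sq_nonneg (1 - r)) (sub_nonneg.2 hr1)]

lemma le_add_Hfun_of_sub_log_le {s v : ℝ} (hs : 0 ≤ s) (hv : 0 < v)
    (h : s - log (1 + s) ≤ v ^ 2 / 2) : s ≤ v + Hfun v := by
  have h1v : 0 < 1 + v := by linarith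
  have htangent : log (1 + s) - log (1 + v) ≤ (s - v) / (1 + v) := by
    rw [← log_div (by linarith) h1v.ne']
    calc log ((1 + s) / (1 + v)) ≤ (1 + s) / (1 + v) - 1 := log_le_sub_one_of_pos (by positivity)
      _ = (s - v) / (1 + v) := by field_simp; ring
  have hsv : s * v ≤ (1 + v) * (v ^ 2 / 2 + log (1 + v)) - v := by
    rw [le_div_iff₀ h1v] at htangent
    nlinarith
  rw [Hfun, Kfun, ← sub_le_iff_le_add', le_div_iff₀ hv]
  linear_combination hsv

lemma mul_log_div_add_sub_eq {Y Λ : ℝ} (hY : Y ≠ 0) :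
    Y * log (Y / Λ) + Λ - Y = Y * (Λ / Y - 1 - log (Λ / Y)) := by
  rw [← inv_div, log_inv]
  field_simp
  ring

lemma sub_le_sqrt_of_mul_log_div_add_sub_le {Y Λ ε : ℝ} (hΛ : 0 < Λ) (hΛY : Λ ≤ Y)
    (h : Y * log (Y / Λ) + Λ - Y ≤ ε) : Y - Λ ≤ √(2 * ε * Y) := by
  have hY : 0 < Y := hΛ.trans_le hΛY
  have hr := sq_div_two_le_sub_sub_log (div_pos hΛ hY) ((div_le_one hY).2 hΛY)
  rw [mul_log_div_add_sub_eq hY.ne'] at h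
  have hsq : (Y - Λ) ^ 2 = Y * (Y * (1 - Λ / Y) ^ 2) := by field_simp
  refine le_sqrt_of_sq_le ?_
  rw [hsq]
  nlinarith [mul_le_mul_of_nonneg_left hr hY.le]

lemma sub_le_of_mul_log_div_add_sub_le {Y Λ ε : ℝ} (hY : 0 < Y) (hYΛ : Y ≤ Λ) (hε : 0 < ε)
    (h : Y * log (Y / Λ) + Λ - Y ≤ ε) :
    Λ - Y ≤ √(2 * ε * Y) + Y * Gfun (2 * ε / Y) := by
  set v := √(2 * (ε / Y)) with hv
  have hv0 : 0 < v := sqrt_pos.2 (by positivity)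
  have hs : 0 ≤ Λ / Y - 1 := by rw [sub_nonneg, one_le_div hY]; exact hYΛ
  have hbudget : (Λ / Y - 1) - log (1 + (Λ / Y - 1)) ≤ v ^ 2 / 2 := by
    rw [mul_log_div_add_sub_eq hY.ne'] at h
    rwa [hv, sq_sqrt (by positivity), add_sub_cancel, mul_div_cancel_left₀ _ two_ne_zero,
      le_div_iff₀' hY]
  have hvu : v ≤ √(2 * (2 * ε / Y)) :=
    sqrt_le_sqrt (by rw [mul_div_assoc]; linarith [div_pos hε hY])
  have hsG : Λ / Y - 1 ≤ v + Gfun (2 * ε / Y) := by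
    rw [Gfun_eq_Hfun_sqrt]
    exact (le_add_Hfun_of_sub_log_le hs hv0 hbudget).trans
      ((add_le_add_iff_left v).2 (monotoneOn_Hfun hv0 (hv0.trans_le hvu) hvu))
  have hYv : Y * v = √(2 * ε * Y) := by
    rw [hv, show 2 * ε * Y = Y ^ 2 * (2 * (ε / Y)) by field_simp, sqrt_mul (sq_nonneg Y),
      sqrt_sq hY.le]
  calc Λ - Y = Y * (Λ / Y - 1) := by field_simp
    _ ≤ Y * (v + Gfun (2 * ε / Y)) := mul_le_mul_of_nonneg_left hsG hY.le
    _ = √(2 * ε * Y) + Y * Gfun (2 * ε / Y) := by rw [mul_add, hYv]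

lemma mul_log_add_sub_mul_le_mul_log_div {a b c : ℝ} (ha : 0 ≤ a) (hb : 0 ≤ b)
    (hab : b = 0 → a = 0) (hc : 0 < c) : a * log c + a - b * c ≤ a * log (a / b) := by
  rcases ha.eq_or_lt with rfl | ha
  · simpa using mul_nonneg hb hc.le
  have hb : 0 < b := hb.lt_of_ne' fun hb0 => ha.ne' (hab hb0)
  have hlog := one_sub_inv_le_log_of_pos (show 0 < a / b / c by positivity)
  rw [log_div (by positivity) hc.ne', inv_div] at hlog
  have hmul := mul_le_mul_of_nonneg_left hlog ha.le
  rw [mul_sub, mul_sub, mul_one, show a * (c / (a / b)) = b * c by field_simp] at hmul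
  linarith

lemma mul_log_div_add_sub_le_Idiv {M : ℕ} {y lam : Fin M → ℝ} (hy : ∀ j, 0 ≤ y j)
    (hlam : ∀ j, 0 ≤ lam j) (hsupp : ∀ j, lam j = 0 → y j = 0)
    (hY : 0 < ∑ j, y j) (hΛ : 0 < ∑ j, lam j) :
    (∑ j, y j) * log ((∑ j, y j) / ∑ j, lam j) + ∑ j, lam j - ∑ j, y j ≤
      Idiv y lam := by
  have hsum := Finset.sum_le_sum fun j (_ : j ∈ Finset.univ) =>
    mul_log_add_sub_mul_le_mul_log_div (hy j) (hlam j) (hsupp j) (div_pos hY hΛ)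
  rw [Finset.sum_sub_distrib, Finset.sum_add_distrib, ← Finset.sum_mul, ← Finset.sum_mul,
    mul_div_cancel₀ _ hΛ.ne'] at hsum
  rw [Idiv, Finset.sum_sub_distrib, Finset.sum_add_distrib]
  linarith

lemma l1norm_eq_sum_of_nonneg {M : ℕ} {v : Fin M → ℝ} (hv : ∀ j, 0 ≤ v j) :
    l1norm v = ∑ j, v j :=
  Finset.sum_congr rfl fun j _ => abs_of_nonneg (hv j)

lemma l1norm_pos {M : ℕ} {v : Fin M → ℝ} (hv : v ≠ 0) : 0 < l1norm v := by
  obtain ⟨j, hj⟩ := Function.ne_iff.1 hv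
  exact Finset.sum_pos' (fun i _ => abs_nonneg (v i)) ⟨j, Finset.mem_univ j, abs_pos.2 hj⟩

/-- Lemma 3: if `I(y‖λ) ≤ ε` then `|Y − Λ| ≤ √(2εY) + Y·G(2ε/Y)`, where `Y = ‖y‖₁`,
`Λ = ‖λ‖₁`. -/
theorem l1_total_mass_bound {M : ℕ} (y lam : Fin M → ℝ)
    (hy : ∀ j, 0 ≤ y j) (hlam : ∀ j, 0 ≤ lam j)
    (hy0 : y ≠ 0) (hlam0 : lam ≠ 0)
    (hsupp : ∀ j, lam j = 0 → y j = 0)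
    (ε : ℝ) (hε : 0 < ε)
    (h : Idiv y lam ≤ ε) :
    |l1norm y - l1norm lam| ≤
      Real.sqrt (2 * ε * l1norm y) + l1norm y * Gfun (2 * ε / l1norm y) := by
  have hY := l1norm_pos hy0
  have hΛ := l1norm_pos hlam0
  rw [l1norm_eq_sum_of_nonneg hy, l1norm_eq_sum_of_nonneg hlam] at *
  have htotal := (mul_log_div_add_sub_le_Idiv hy hlam hsupp hY hΛ).trans h
  rcases le_total (∑ j, lam j) (∑ j, y j) with hΛY | hYΛ
  · rw [abs_of_nonneg (sub_nonneg.2 hΛY)]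
    exact (sub_le_sqrt_of_mul_log_div_add_sub_le hΛ hΛY htotal).trans
      (le_add_of_nonneg_right (mul_nonneg hY.le (Gfun_nonneg _)))
  · rw [abs_sub_comm, abs_of_nonneg (sub_nonneg.2 hYΛ)]
    exact sub_le_of_mul_log_div_add_sub_le hY hYΛ hε htotal
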